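/- arXiv:2511.00495 — 2 statements merged into one kernel-verified Lean document; each statement's English description precedes it below -/
import Mathlib

section
/- Let f : ℝⁿ × ℝᵐ → ℝⁿ and h : ℝⁿ × ℝᵐ → ℝᵐ satisfy the dissipativity condition Σᵢ fᵢ(Y,C)·Yᵢ + Σⱼ hⱼ(Y,C)·Cⱼ ≤ −α(|Y|² + |C|²) + β for all Y, C, with α > 0, β ≥ 0. Suppose Y, C : [0,T] → ℝⁿ × ℝᵐ are differentiable with Y' = r(t)·f(Y,C) and C' = r(t)·h(Y,C), where 0 < r_min ≤ r(t) ≤ r_max. Then E(t) := ½(|Y(t)|² + |C(t)|²) satisfies E(t) ≤ E(0) + β·r_max/(2α·r_min) for all t ∈ [0,T]. -/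
/-!
Along a solution, the energy `E = ½(|Y|² + |C|²)` has derivative `r (⟪f, Y⟫ + ⟪h, C⟫)`, so the
dissipativity condition and the bounds on `r` give the linear differential inequality
`E' ≤ -2 α r_min E + β r_max`. By Grönwall's inequality `E` then stays below the larger of `E(0)`
and the equilibrium level `β r_max / (2 α r_min)`, hence below their sum.
-/

open Set Real Topology

lemma gronwallBound_neg_le_max {δ K ε x : ℝ} (hK : 0 < K) (hx : 0 ≤ x) :
    gronwallBound δ (-K) ε x ≤ max δ (ε / K) := by
  set e := exp (-K * x)
  have he_pos : 0 < e := exp_pos _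
  have he_le_one : e ≤ 1 := exp_le_one_iff.mpr (by nlinarith)
  have hconvex : gronwallBound δ (-K) ε x = e * δ + (1 - e) * (ε / K) := by
    rw [gronwallBound_of_K_ne_0 (neg_ne_zero.mpr hK.ne')]
    field_simp
    simp only [e, neg_mul]
    ring
  have h1e : 0 ≤ 1 - e := by linarith
  rw [hconvex]
  calc e * δ + (1 - e) * (ε / K) ≤ e * max δ (ε / K) + (1 - e) * max δ (ε / K) := by
        gcongr
        · exact le_max_left _ _
        · exact le_max_right _ _
    _ = max δ (ε / K) := by ring

lemma le_max_of_hasDerivAt_le_neg_mul_add {E E' : ℝ → ℝ} {a b K ε : ℝ} (hK : 0 < K)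
    (hE : ∀ t ∈ Icc a b, HasDerivAt E (E' t) t)
    (hbound : ∀ t ∈ Ico a b, E' t ≤ -K * E t + ε) :
    ∀ t ∈ Icc a b, E t ≤ max (E a) (ε / K) := by
  have hcont : ContinuousOn E (Icc a b) := fun t ht => (hE t ht).continuousAt.continuousWithinAt
  have hslope : ∀ t ∈ Ico a b, ∀ ρ, E' t < ρ →
      ∃ᶠ s in 𝓝[>] t, (s - t)⁻¹ * (E s - E t) < ρ := fun t ht ρ hρ =>
    ((hE t (Ico_subset_Icc_self ht)).hasDerivWithinAt.liminf_right_slope_le hρ).mono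
      fun s hs => by rwa [slope_def_field, div_eq_inv_mul] at hs
  intro t ht
  calc E t ≤ gronwallBound (E a) (-K) ε (t - a) :=
        le_gronwallBound_of_liminf_deriv_right_le hcont hslope le_rfl hbound t ht
    _ ≤ max (E a) (ε / K) := gronwallBound_neg_le_max hK (sub_nonneg.mpr ht.1)

lemma hasDerivAt_half_norm_sq_add_norm_sq {F G : Type*}
    [NormedAddCommGroup F] [InnerProductSpace ℝ F] [NormedAddCommGroup G] [InnerProductSpace ℝ G]
    {u : ℝ → F} {v : ℝ → G} {a : F} {b : G} {ρ t : ℝ}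
    (hu : HasDerivAt u (ρ • a) t) (hv : HasDerivAt v (ρ • b) t) :
    HasDerivAt (fun s => (1 / 2) * (‖u s‖ ^ 2 + ‖v s‖ ^ 2))
      (ρ * (inner ℝ a (u t) + inner ℝ b (v t))) t := by
  refine ((hu.norm_sq.add hv.norm_sq).const_mul (1 / 2)).congr_deriv ?_
  simp only [real_inner_smul_right, real_inner_comm a, real_inner_comm b]
  ring

/-- Finite-dimensional energy estimate: under the dissipativity condition
`⟪f(Y,C),Y⟫ + ⟪h(Y,C),C⟫ ≤ −α(|Y|²+|C|²) + β`, solutions of the reaction ODE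
`Y' = r(t) f(Y,C)`, `C' = r(t) h(Y,C)` with `0 < r_min ≤ r(t) ≤ r_max` satisfy
`E(t) ≤ E(0) + β r_max / (2 α r_min)` where `E = ½(|Y|²+|C|²)`. -/
theorem stmt_9 (n m : ℕ) (α β rmin rmax T : ℝ)
    (hα : 0 < α) (hβ : 0 ≤ β) (hrmin : 0 < rmin) (hT : 0 ≤ T)
    (f : EuclideanSpace ℝ (Fin n) → EuclideanSpace ℝ (Fin m) → EuclideanSpace ℝ (Fin n))
    (h : EuclideanSpace ℝ (Fin n) → EuclideanSpace ℝ (Fin m) → EuclideanSpace ℝ (Fin m))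
    (hdiss : ∀ (Y : EuclideanSpace ℝ (Fin n)) (C : EuclideanSpace ℝ (Fin m)),
      (inner ℝ (f Y C) Y : ℝ) + (inner ℝ (h Y C) C : ℝ) ≤ -α * (‖Y‖^2 + ‖C‖^2) + β)
    (r : ℝ → ℝ) (hr : ∀ t ∈ Set.Icc 0 T, rmin ≤ r t ∧ r t ≤ rmax)
    (Y : ℝ → EuclideanSpace ℝ (Fin n)) (C : ℝ → EuclideanSpace ℝ (Fin m))
    (hY : ∀ t ∈ Set.Icc 0 T, HasDerivAt Y (r t • f (Y t) (C t)) t)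
    (hC : ∀ t ∈ Set.Icc 0 T, HasDerivAt C (r t • h (Y t) (C t)) t) :
    ∀ t ∈ Set.Icc 0 T,
      (1/2) * (‖Y t‖^2 + ‖C t‖^2) ≤
        (1/2) * (‖Y 0‖^2 + ‖C 0‖^2) + β * rmax / (2 * α * rmin) := by
  have hderiv := fun t ht => hasDerivAt_half_norm_sq_add_norm_sq (hY t ht) (hC t ht)
  have hbound : ∀ t ∈ Ico 0 T,
      r t * (inner ℝ (f (Y t) (C t)) (Y t) + inner ℝ (h (Y t) (C t)) (C t)) ≤
        -(2 * α * rmin) * ((1 / 2) * (‖Y t‖ ^ 2 + ‖C t‖ ^ 2)) + β * rmax := by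
    intro t ht
    obtain ⟨hr_ge, hr_le⟩ := hr t (Ico_subset_Icc_self ht)
    set S := ‖Y t‖ ^ 2 + ‖C t‖ ^ 2
    have hαS : -(α * S) ≤ 0 := neg_nonpos.mpr (by positivity)
    calc _ ≤ r t * (-α * S + β) := mul_le_mul_of_nonneg_left (hdiss _ _) (hrmin.trans_le hr_ge).le
      _ = -(α * S) * r t + β * r t := by ring
      _ ≤ -(α * S) * rmin + β * rmax :=
        add_le_add (mul_le_mul_of_nonpos_left hr_ge hαS) (mul_le_mul_of_nonneg_left hr_le hβ)
      _ = -(2 * α * rmin) * ((1 / 2) * S) + β * rmax := by ring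
  have hrmax : 0 < rmax := hrmin.trans_le ((hr 0 ⟨le_rfl, hT⟩).1.trans (hr 0 ⟨le_rfl, hT⟩).2)
  intro t ht
  refine (le_max_of_hasDerivAt_le_neg_mul_add (by positivity) hderiv hbound t ht).trans ?_
  exact max_le_add_of_nonneg (by positivity) (by positivity)
end

section
/- Let Y : [0,1] × [0,T] → ℝⁿ be given by Y(z,t) = φ(Z(0;z,t)) + ∫_0^t F(Y(Z(s;z,t),s), s) ds, where φ ∈ C¹([0,1];ℝⁿ), Z(s;z,t) = z − ∫_s^t v(τ)dτ with v continuous, and F is C¹ in z (along characteristics) with ‖∂_z F‖_∞ < ∞. Then ∂_z Y exists, is continuous, and satisfies ‖∂_z Y(·,t)‖_∞ ≤ ‖φ'‖_∞ + t·‖∂_z F‖_∞ for each t ∈ [0,T]. -/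
/-!
Write `I t = ∫_0^t v`. The characteristic through `(z, t)` is `Z(s; z, t) = (z - I t) + I s`,
so its `z`-dependence is a pure translation and `Y(·, t)` is `x ↦ φ x + ∫_0^t G(x + I s, s) ds`
evaluated at `x = z - I t`. Differentiating under the integral sign (dominated by the constant
bound on `∂_z G`) gives `∂_z Y(z, t) = φ'(z - I t) + ∫_0^t ∂_z G(z - I t + I s, s) ds`, from
which both the continuity and the bound `‖φ'‖_∞ + t ‖∂_z G‖_∞` are read off.
-/

open MeasureTheory

section ParametricIntegral

variable {E : Type*} [NormedAddCommGroup E] [NormedSpace ℝ E]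

theorem hasDerivAt_intervalIntegral_of_norm_deriv_le {F F' : ℝ → ℝ → E} {a b x₀ K : ℝ}
    (hF : ∀ x, Continuous (F x)) (hF' : Continuous (F' x₀))
    (hderiv : ∀ x s, HasDerivAt (F · s) (F' x s) x) (hbound : ∀ x s, ‖F' x s‖ ≤ K) :
    HasDerivAt (fun x => ∫ s in a..b, F x s) (∫ s in a..b, F' x₀ s) x₀ :=
  (intervalIntegral.hasDerivAt_integral_of_dominated_loc_of_deriv_le (bound := fun _ => K)
    Filter.univ_mem (.of_forall fun x => (hF x).aestronglyMeasurable)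
    ((hF x₀).intervalIntegrable a b) hF'.aestronglyMeasurable
    (.of_forall fun s _ x _ => hbound x s) intervalIntegrable_const
    (.of_forall fun s _ x _ => hderiv x s)).2

theorem hasDerivAt_intervalIntegral_comp_add_of_norm_deriv_le {G Gz : ℝ → ℝ → E}
    {c : ℝ → ℝ} {K : ℝ} (hc : Continuous c) (hG : Continuous fun p : ℝ × ℝ => G p.1 p.2)
    (hGz : Continuous fun p : ℝ × ℝ => Gz p.1 p.2)
    (hderiv : ∀ s x, HasDerivAt (G · s) (Gz x s) x) (hbound : ∀ x s, ‖Gz x s‖ ≤ K)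
    (a b x₀ : ℝ) :
    HasDerivAt (fun x => ∫ s in a..b, G (x + c s) s) (∫ s in a..b, Gz (x₀ + c s) s) x₀ :=
  hasDerivAt_intervalIntegral_of_norm_deriv_le
    (fun _ => hG.comp ((continuous_const.add hc).prodMk continuous_id))
    (hGz.comp ((continuous_const.add hc).prodMk continuous_id))
    (fun x s => (hderiv s (x + c s)).comp_add_const x (c s)) (fun _ _ => hbound _ _)

end ParametricIntegral

theorem sub_intervalIntegral_eq_sub_primitive_add {v : ℝ → ℝ} (hv : Continuous v)
    (z s t : ℝ) :
    z - ∫ τ in s..t, v τ = (z - ∫ τ in (0:ℝ)..t, v τ) + ∫ τ in (0:ℝ)..s, v τ := by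
  rw [← intervalIntegral.integral_interval_sub_left (hv.intervalIntegrable 0 t)
    (hv.intervalIntegrable 0 s)]
  ring

theorem stmt_15_general (n : ℕ) (T Kφ K : ℝ)
    (v : ℝ → ℝ) (hv : Continuous v)
    (φ φ' : ℝ → EuclideanSpace ℝ (Fin n))
    (hφ : ∀ x, HasDerivAt φ (φ' x) x) (hφ'c : Continuous φ')
    (hφ'bd : ∀ x, ‖φ' x‖ ≤ Kφ)
    (G Gz : ℝ → ℝ → EuclideanSpace ℝ (Fin n))
    (hGc : Continuous (fun p : ℝ × ℝ => G p.1 p.2))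
    (hGzc : Continuous (fun p : ℝ × ℝ => Gz p.1 p.2))
    (hGz : ∀ s x, HasDerivAt (fun x => G x s) (Gz x s) x)
    (hGzbd : ∀ x s, ‖Gz x s‖ ≤ K)
    (Y : ℝ → ℝ → EuclideanSpace ℝ (Fin n))
    (hY : ∀ z t : ℝ, Y z t =
      φ ((z - ∫ τ in (0:ℝ)..t, v τ)) +
        ∫ s in (0:ℝ)..t, G (z - ∫ τ in s..t, v τ) s) :
    ∃ Yz : ℝ → ℝ → EuclideanSpace ℝ (Fin n),
      Continuous (fun p : ℝ × ℝ => Yz p.1 p.2) ∧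
      (∀ t z : ℝ, HasDerivAt (fun z => Y z t) (Yz z t) z) ∧
      (∀ t ∈ Set.Icc (0:ℝ) T, ∀ z ∈ Set.Icc (0:ℝ) 1, ‖Yz z t‖ ≤ Kφ + t * K) := by
  set I : ℝ → ℝ := fun t => ∫ τ in (0:ℝ)..t, v τ
  have hI : Continuous I := intervalIntegral.continuous_primitive hv.intervalIntegrable 0
  have hY_shift : ∀ t, (fun z => Y z t) =
      fun z => φ (z - I t) + ∫ s in (0:ℝ)..t, G (z - I t + I s) s :=
    fun t => funext fun z => by
      rw [hY]
      exact congrArg _ (intervalIntegral.integral_congr fun s _ => by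
        rw [sub_intervalIntegral_eq_sub_primitive_add hv])
  refine ⟨fun z t => φ' (z - I t) + ∫ s in (0:ℝ)..t, Gz (z - I t + I s) s, ?_, ?_, ?_⟩
  · refine (hφ'c.comp (by fun_prop)).add ?_
    exact intervalIntegral.continuous_parametric_intervalIntegral_of_continuous
      (f := fun (p : ℝ × ℝ) s => Gz (p.1 - I p.2 + I s) s)
      (hGzc.comp (f := fun q : (ℝ × ℝ) × ℝ => (q.1.1 - I q.1.2 + I q.2, q.2)) (by fun_prop))
      continuous_snd
  · intro t z
    rw [hY_shift]
    exact ((hφ _).add (hasDerivAt_intervalIntegral_comp_add_of_norm_deriv_le hI hGc hGzc hGz hGzbd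
      0 t (z - I t))).comp_sub_const z (I t)
  · rintro t ⟨ht, -⟩ z -
    have hint : ‖∫ s in (0:ℝ)..t, Gz (z - I t + I s) s‖ ≤ K * |t - 0| :=
      intervalIntegral.norm_integral_le_of_norm_le_const fun s _ => hGzbd _ s
    rw [sub_zero, abs_of_nonneg ht, mul_comm] at hint
    exact (norm_add_le _ _).trans (add_le_add (hφ'bd _) hint)

/-- Upgrade from mild to classical solution: differentiating the Duhamel formula
`Y(z,t) = φ(Z(0;z,t)) + ∫_0^t G(Z(s;z,t),s) ds` in `z`, where
`Z(s;z,t) = z − ∫_s^t v`, yields a continuous spatial derivative `∂_z Y` with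
`‖∂_z Y(·,t)‖_∞ ≤ ‖φ'‖_∞ + t ‖∂_z G‖_∞`. -/
theorem stmt_15 (n : ℕ) (T Kφ K : ℝ) (hT : 0 ≤ T) (hKφ : 0 ≤ Kφ) (hK : 0 ≤ K)
    (v : ℝ → ℝ) (hv : Continuous v)
    (φ φ' : ℝ → EuclideanSpace ℝ (Fin n))
    (hφ : ∀ x, HasDerivAt φ (φ' x) x) (hφ'c : Continuous φ')
    (hφ'bd : ∀ x, ‖φ' x‖ ≤ Kφ)
    (G Gz : ℝ → ℝ → EuclideanSpace ℝ (Fin n))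
    (hGc : Continuous (fun p : ℝ × ℝ => G p.1 p.2))
    (hGzc : Continuous (fun p : ℝ × ℝ => Gz p.1 p.2))
    (hGz : ∀ s x, HasDerivAt (fun x => G x s) (Gz x s) x)
    (hGzbd : ∀ x s, ‖Gz x s‖ ≤ K)
    (Y : ℝ → ℝ → EuclideanSpace ℝ (Fin n))
    (hY : ∀ z t : ℝ, Y z t =
      φ ((z - ∫ τ in (0:ℝ)..t, v τ)) +
        ∫ s in (0:ℝ)..t, G (z - ∫ τ in s..t, v τ) s) :
    ∃ Yz : ℝ → ℝ → EuclideanSpace ℝ (Fin n),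
      Continuous (fun p : ℝ × ℝ => Yz p.1 p.2) ∧
      (∀ t z : ℝ, HasDerivAt (fun z => Y z t) (Yz z t) z) ∧
      (∀ t ∈ Set.Icc (0:ℝ) T, ∀ z ∈ Set.Icc (0:ℝ) 1, ‖Yz z t‖ ≤ Kφ + t * K) :=
  stmt_15_general n T Kφ K v hv φ φ' hφ hφ'c hφ'bd G Gz hGc hGzc hGz hGzbd Y hY
end
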